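/- Let s ≥ 1 and n ≥ 0 be integers. For every a = (a_0, …, a_{s−1}) ∈ W_s(K) with ord_s(a) ≥ −n, the element F^{s−1}d(a) = Σ_{0 ≤ j < s} a_j^{p^{s−1−j}−1}·d a_j of Ω¹_K lies in fil_n Ω¹_K; that is, F^{s−1}d maps fil_n W_s(K) into fil_n Ω¹_K. -/

import Mathlib

/-!
Setting: `K` is a (complete) discrete valuation field of characteristic `p > 0` with
normalized additive valuation `v : K → ℤ ∪ {∞}` and uniformizer `π` (i.e. `v π = 1`).
`W_s(K) = TruncatedWittVector p s K`, and `Ω¹` denotes absolute Kähler differentials.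
-/

noncomputable section

/-- `ord_s(a) = min_{0 ≤ j < s} p^(s-1-j) · v(a_j)` on Witt vectors of length `s`. -/
def wittOrd (p : ℕ) {K : Type*} [Field K] (v : AddValuation K (WithTop ℤ))
    {s : ℕ} (a : TruncatedWittVector p s K) : WithTop ℤ :=
  Finset.univ.inf fun j : Fin s => p ^ (s - 1 - (j : ℕ)) • v (a.coeff j)

/-- `fil_n W_s(K) = {a ∈ W_s(K) : ord_s(a) ≥ -n}`. -/
def wittFil (p : ℕ) {K : Type*} [Field K] (v : AddValuation K (WithTop ℤ))
    (s : ℕ) (n : ℤ) : Set (TruncatedWittVector p s K) :=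
  {a | ((-n : ℤ) : WithTop ℤ) ≤ wittOrd p v a}

/-- The valuation ring `O_K = {x : K | v(x) ≥ 0}`. -/
def valRing {K : Type*} [Field K] (v : AddValuation K (WithTop ℤ)) : Subring K where
  carrier := {x | 0 ≤ v x}
  one_mem' := by simp [v.map_one]
  mul_mem' := by
    intro a b ha hb
    simp only [Set.mem_setOf_eq] at *
    rw [v.map_mul]
    exact add_nonneg ha hb
  zero_mem' := by simp [v.map_zero]
  add_mem' := by
    intro a b ha hb
    exact le_trans (le_min ha hb) (v.map_add a b)
  neg_mem' := by
    intro a ha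
    simpa [v.map_neg] using ha

/-- The image `Im(Ω¹_{O_K}) ⊆ Ω¹_K` of the canonical map `Ω¹_{O_K} → Ω¹_K` on absolute
Kähler differentials. -/
def imOmegaValRing {K : Type*} [Field K] (v : AddValuation K (WithTop ℤ)) :
    Set (KaehlerDifferential ℤ K) :=
  Set.range (KaehlerDifferential.map ℤ ℤ (valRing v) K)

/-- `fil_n Ω¹_K = π^(-n) · ( Im(Ω¹_{O_K}) + O_K · π⁻¹ dπ )`, i.e. the set of elements
`π^(-n) • (η + x • π⁻¹ • dπ)` with `η ∈ Im(Ω¹_{O_K})` and `x ∈ O_K`. -/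
def filOmega {K : Type*} [Field K] (v : AddValuation K (WithTop ℤ))
    (π : K) (n : ℕ) : Set (KaehlerDifferential ℤ K) :=
  {ω | ∃ η ∈ imOmegaValRing v, ∃ x ∈ valRing v,
        ω = π⁻¹ ^ n • (η + x • (π⁻¹ • (KaehlerDifferential.D ℤ K π)))}

/-- `F^(s-1)d (a) = ∑_j a_j ^ (p^(s-1-j) - 1) • d a_j ∈ Ω¹_K`. -/
def wittFd (p : ℕ) {K : Type*} [Field K] {s : ℕ}
    (a : TruncatedWittVector p s K) : KaehlerDifferential ℤ K :=
  ∑ j : Fin s, (a.coeff j ^ (p ^ (s - 1 - (j : ℕ)) - 1)) • KaehlerDifferential.D ℤ K (a.coeff j)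

lemma zero_mem_filOmega {K : Type*} [Field K] (v : AddValuation K (WithTop ℤ))
    (π : K) (n : ℕ) : (0 : KaehlerDifferential ℤ K) ∈ filOmega v π n :=
  ⟨0, ⟨0, map_zero _⟩, 0, (valRing v).zero_mem, by simp⟩

lemma add_mem_filOmega {K : Type*} [Field K] (v : AddValuation K (WithTop ℤ))
    (π : K) (n : ℕ) {ω₁ ω₂ : KaehlerDifferential ℤ K}
    (h₁ : ω₁ ∈ filOmega v π n) (h₂ : ω₂ ∈ filOmega v π n) : ω₁ + ω₂ ∈ filOmega v π n := by
  obtain ⟨η₁, ⟨e₁, he₁⟩, x₁, hx₁, rfl⟩ := h₁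
  obtain ⟨η₂, ⟨e₂, he₂⟩, x₂, hx₂, rfl⟩ := h₂
  refine ⟨η₁ + η₂, ⟨e₁ + e₂, by rw [map_add, he₁, he₂]⟩, x₁ + x₂,
    (valRing v).add_mem hx₁ hx₂, ?_⟩
  rw [← smul_add]
  congr 1
  rw [add_smul]
  abel

set_option synthInstance.maxHeartbeats 1000000 in
lemma smul_D_mem_im {K : Type*} [Field K] (v : AddValuation K (WithTop ℤ))
    {c u : K} (hc : c ∈ valRing v) (hu : u ∈ valRing v) :
    c • KaehlerDifferential.D ℤ K u ∈ imOmegaValRing v := by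
  refine ⟨(⟨c, hc⟩ : valRing v) • KaehlerDifferential.D ℤ (valRing v) ⟨u, hu⟩, ?_⟩
  rw [map_smul, KaehlerDifferential.map_D, ← algebraMap_smul K (⟨c, hc⟩ : valRing v)
    (KaehlerDifferential.D ℤ K _)]
  rfl

lemma nsmul_coe (c : ℕ) (x : ℤ) : c • (x : WithTop ℤ) = ((c • x : ℤ) : WithTop ℤ) := by
  push_cast; rfl

lemma term_mem {K : Type*} [Field K] (v : AddValuation K (WithTop ℤ))
    (π : K) (hπ : v π = 1) (n q : ℕ) (hq : 1 ≤ q) (a : K)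
    (h : (-(n:ℤ) : WithTop ℤ) ≤ q • v a) :
    (a ^ (q-1)) • KaehlerDifferential.D ℤ K a ∈ filOmega v π n := by
  obtain ⟨r, rfl⟩ : ∃ r, q = r + 1 := ⟨q - 1, by omega⟩
  have hr : r + 1 - 1 = r := by omega
  rw [hr]
  clear hq hr
  have hπ0 : π ≠ 0 := by
    intro h0
    rw [h0, v.map_zero] at hπ
    exact (by simp : (⊤ : WithTop ℤ) ≠ ((1:ℤ) : WithTop ℤ)) (by exact_mod_cast hπ)
  rcases eq_or_ne a 0 with rfl | ha
  · simpa using zero_mem_filOmega v π n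
  obtain ⟨m, hm⟩ := WithTop.ne_top_iff_exists.mp (v.ne_top_iff.mpr ha)
  rw [← hm] at h
  have hone : ((1:ℤ) : WithTop ℤ) = (1 : WithTop ℤ) := rfl
  have hmn : -(n:ℤ) ≤ (r+1:ℕ) • m := by
    rw [nsmul_coe] at h
    exact_mod_cast h
  rw [nsmul_eq_mul] at hmn
  push_cast at hmn
  obtain ⟨u, hu_def⟩ : ∃ u : K, u = a * (π ^ (m : ℤ))⁻¹ := ⟨_, rfl⟩
  have hπm0 : (π : K) ^ (m:ℤ) ≠ 0 := zpow_ne_zero _ hπ0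
  have hau : a = u * π ^ (m:ℤ) := by
    rw [hu_def]; field_simp
  have hvπm : v (π ^ (m:ℤ)) = (m : WithTop ℤ) := by
    rcases le_or_gt 0 m with hm0 | hm0
    · lift m to ℕ using hm0
      rw [zpow_natCast, v.map_pow, hπ, ← hone, nsmul_coe]
      exact congrArg _ (by simp)
    · have heq : π ^ (m:ℤ) = (π ^ (-m).toNat)⁻¹ := by
        rw [← zpow_natCast, Int.toNat_of_nonneg (by omega), zpow_neg, inv_inv]
      rw [heq, v.map_inv, v.map_pow, hπ, ← hone, nsmul_coe,
        ← WithTop.LinearOrderedAddCommGroup.coe_neg]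
      congr 1
      rw [nsmul_eq_mul, mul_one]
      omega
  have hvu : v u = 0 := by
    rw [hu_def, v.map_mul, v.map_inv, hvπm, ← hm,
      ← WithTop.LinearOrderedAddCommGroup.coe_neg, ← WithTop.coe_add, add_neg_cancel]
    rfl
  have hu0 : u ≠ 0 := by
    intro h0
    rw [h0, v.map_zero] at hvu
    exact (by simp : (⊤ : WithTop ℤ) ≠ ((0:ℤ) : WithTop ℤ)) (by exact_mod_cast hvu)
  have humem : u ∈ valRing v := le_of_eq hvu.symm
  have hπmem : π ∈ valRing v := by
    show (0 : WithTop ℤ) ≤ v π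
    rw [hπ]
    exact zero_le_one
  obtain ⟨k, hk⟩ : ∃ k : ℕ, (k : ℤ) = ((r:ℤ)+1) * m + n :=
    ⟨(((r:ℤ)+1) * m + n).toNat, Int.toNat_of_nonneg (by omega)⟩
  set D := KaehlerDifferential.D ℤ K with hD
  have hcoeff1 : π ^ k * u ^ r ∈ valRing v :=
    (valRing v).mul_mem (pow_mem hπmem k) (pow_mem humem r)
  have hcoeff2 : (m : K) * (u ^ (r+1) * π ^ k) ∈ valRing v :=
    (valRing v).mul_mem (intCast_mem (valRing v) m)
      ((valRing v).mul_mem (pow_mem humem (r+1)) (pow_mem hπmem k))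
  refine ⟨(π ^ k * u ^ r) • D u, smul_D_mem_im v hcoeff1 humem,
    (m : K) * (u ^ (r+1) * π ^ k), hcoeff2, ?_⟩
  have hDa : D a = π ^ (m:ℤ) • D u + (u * ((m:K) * π ^ ((m:ℤ)-1))) • D π := by
    conv_lhs => rw [hau]
    rw [Derivation.leibniz, Derivation.leibniz_zpow,
      ← Int.cast_smul_eq_zsmul K m, add_comm]
    congr 1
    rw [smul_smul, smul_smul]
    congr 1
    ring
  have c1 : a ^ r * π ^ (m:ℤ) = π⁻¹ ^ n * (π ^ k * u ^ r) := by
    rcases le_or_gt 0 m with hm0 | hm0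
    · lift m to ℕ using hm0
      have hkk : k = (r+1) * m + n := by exact_mod_cast hk
      rw [zpow_natCast] at hau
      rw [zpow_natCast, hau, hkk]
      rw [inv_pow]
      field_simp
      ring
    · obtain ⟨M, hM⟩ : ∃ M : ℕ, m = -(M:ℤ) := ⟨(-m).toNat, by omega⟩
      subst hM
      have hnn : n = k + (r+1) * M := by
        have h1 : (n : ℤ) = (k : ℤ) + ((r:ℤ)+1) * M := by linarith [hk]
        exact_mod_cast h1
      have hπM : π ^ (-(M:ℤ)) = (π ^ M)⁻¹ := by
        rw [zpow_neg, zpow_natCast]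
      rw [hπM] at hau
      have hua : u = a * π ^ M := by
        rw [hau]; field_simp
      rw [hπM, hua, hnn]
      rw [inv_pow]
      field_simp
      ring
  have c2 : a ^ r * (u * ((m:K) * π ^ ((m:ℤ)-1)))
      = π⁻¹ ^ n * ((m:K) * (u ^ (r+1) * π ^ k)) * π⁻¹ := by
    rcases lt_trichotomy m 0 with hm0 | hm0 | hm0
    · obtain ⟨M, hM⟩ : ∃ M : ℕ, m = -(M:ℤ) := ⟨(-m).toNat, by omega⟩
      subst hM
      have hnn : n = k + (r+1) * M := by
        have h1 : (n : ℤ) = (k : ℤ) + ((r:ℤ)+1) * M := by linarith [hk]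
        exact_mod_cast h1
      have hπM : π ^ (-(M:ℤ)) = (π ^ M)⁻¹ := by
        rw [zpow_neg, zpow_natCast]
      have hπM1 : π ^ (-(M:ℤ) - 1) = (π ^ (M+1))⁻¹ := by
        rw [show -(M:ℤ) - 1 = -((M:ℤ)+1) from by ring, zpow_neg]
        congr 1
        rw [← zpow_natCast π (M+1)]
        push_cast
        rfl
      rw [hπM] at hau
      have hua : u = a * π ^ M := by
        rw [hau]; field_simp
      rw [hπM1, hua, hnn]
      push_cast
      rw [inv_pow]
      field_simp
      ring
    · subst hm0
      simp
    · obtain ⟨M, hM⟩ : ∃ M : ℕ, m = (M:ℤ) + 1 := ⟨(m-1).toNat, by omega⟩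
      subst hM
      have hkk : k = (r+1) * (M + 1) + n := by
        have h1 : (k:ℤ) = ((r:ℤ)+1) * ((M:ℤ)+1) + n := hk
        exact_mod_cast h1
      have hπM : π ^ ((M:ℤ)+1) = π ^ (M+1) := by
        rw [← zpow_natCast π (M+1)]
        push_cast
        rfl
      have hπM1 : π ^ ((M:ℤ)+1-1) = π ^ M := by
        rw [show (M:ℤ)+1-1 = (M:ℤ) from by ring, zpow_natCast]
      rw [hπM] at hau
      rw [hπM1, hau, hkk]
      push_cast
      rw [inv_pow]
      field_simp
      ring
  rw [hDa]
  match_scalars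
  · linear_combination c1
  · linear_combination c2


/-- For `s ≥ 1` and `n ≥ 0`, the map `F^(s-1)d` sends
`fil_n W_s(K)` into `fil_n Ω¹_K`. -/
theorem statement3 (p : ℕ) [Fact p.Prime] (K : Type*) [Field K] [CharP K p]
    (v : AddValuation K (WithTop ℤ)) (hv : Function.Surjective v)
    (π : K) (hπ : v π = 1) (s : ℕ) (hs : 1 ≤ s) (n : ℕ) :
    ∀ a ∈ wittFil p v s (n : ℤ), wittFd p a ∈ filOmega v π n := by
  intro a hfil
  unfold wittFd
  refine Finset.sum_induction _ (· ∈ filOmega v π n)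
    (fun _ _ => add_mem_filOmega v π n) (zero_mem_filOmega v π n) (fun j _ => ?_)
  refine term_mem v π hπ n (p ^ (s - 1 - (j : ℕ)))
    (Nat.one_le_pow _ _ (Fact.out (p := p.Prime)).pos) (a.coeff j) ?_
  exact le_trans hfil (Finset.inf_le (Finset.mem_univ j))
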